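/- Suppose for q = 1,…,p−1 there exist operators B_q with I_p⋯I₂ A_q = B_q I_p I_{p−1}⋯I_{q+1}, and define B_p := I_p⋯I₂ A_p. If Z : ℝ → H₁ × ⋯ × H_p is differentiable with Z₁' = I_p Z₂, Z₂' = I_{p−1} Z₃, …, Z_{p−1}' = I₂ Z_p, and Z_p' = A_p Z₁ + A_{p−1} Z₂ + ⋯ + A₁ Z_p (deterministic case, no noise), then X := Z₁ is p-times differentiable and X^{(p)} = B_p X + B_{p−1} X' + ⋯ + B₁ X^{(p−1)}, i.e. Q_p(d/dt) X = 0 where Q_p(λ) = λ^p − B₁λ^{p−1} − ⋯ − B_p. -/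

import Mathlib

/-!
Differentiating `Z₁` along the chain `Z_j' = I_{p+1-j} Z_{j+1}` gives
`X^{(k)} = I_p ⋯ I_{p+1-k} Z_{k+1}` for `k < p`; one more derivative brings in
`Z_p' = ∑ A_q Z_{p+1-q}`, and the intertwining relations turn each term
`I_p ⋯ I_2 A_q Z_{p+1-q}` back into `B_q X^{(p-q)}`. Smoothness follows by bootstrapping:
the derivatives of the `Z_j` are continuous linear images of the `Z_j` themselves.
-/

/-- The ordered product `I_a ⋯ I_{b+1}` of operators (empty product = identity). -/
def opChain {R : Type*} [Monoid R] (I : ℕ → R) (a b : ℕ) : R :=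
  ((List.range' (b + 1) (a - b)).reverse.map I).prod

open Finset
open scoped ContDiff

section opChain

variable {R : Type*} [Monoid R] (I : ℕ → R)

@[simp]
lemma opChain_self (a : ℕ) : opChain I a a = 1 := by
  simp [opChain]

lemma opChain_eq_mul_of_lt {a b : ℕ} (h : b < a) :
    opChain I a b = opChain I a (b + 1) * I (b + 1) := by
  rw [opChain, opChain, show a - b = a - (b + 1) + 1 by omega, List.range'_succ]
  simp

end opChain

section Bootstrap

variable {ι E : Type*} [NormedAddCommGroup E] [NormedSpace ℝ E]

lemma contDiff_infty_of_deriv_bootstrap {S : Set ι} {Z : ι → ℝ → E}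
    (hdiff : ∀ j ∈ S, Differentiable ℝ (Z j))
    (hderiv : ∀ n : ℕ, (∀ j ∈ S, ContDiff ℝ n (Z j)) → ∀ j ∈ S, ContDiff ℝ n (deriv (Z j))) :
    ∀ j ∈ S, ContDiff ℝ ∞ (Z j) := by
  suffices ∀ n : ℕ, ∀ j ∈ S, ContDiff ℝ n (Z j) from
    fun j hj ↦ contDiff_infty.2 fun n ↦ this n j hj
  intro n
  induction n with
  | zero => exact fun j hj ↦ contDiff_zero.2 (hdiff j hj).continuous
  | succ n ih =>
    intro j hj
    rw [Nat.cast_succ, contDiff_succ_iff_deriv]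
    exact ⟨hdiff j hj, by simp, hderiv n ih j hj⟩

end Bootstrap

section Companion

variable {E : Type*} [NormedAddCommGroup E] [NormedSpace ℝ E]
  {p : ℕ} {I A B : ℕ → E →L[ℝ] E} {Z : ℕ → ℝ → E}

lemma companion_contDiff
    (hderiv : ∀ j ∈ Icc 1 (p - 1), ∀ t : ℝ, HasDerivAt (Z j) (I (p + 1 - j) (Z (j + 1) t)) t)
    (hderivp : ∀ t : ℝ, HasDerivAt (Z p) (∑ q ∈ Icc 1 p, A q (Z (p + 1 - q) t)) t) :
    ∀ j ∈ Icc 1 p, ContDiff ℝ ∞ (Z j) := by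
  have hlt : ∀ j ∈ Icc 1 p, j ≠ p → j ∈ Icc 1 (p - 1) := fun j hj hjp ↦ by
    simp only [mem_Icc] at hj ⊢; omega
  refine contDiff_infty_of_deriv_bootstrap (fun j hj t ↦ ?_) fun n ih j hj ↦ ?_
  · by_cases hjp : j = p
    · exact hjp ▸ (hderivp t).differentiableAt
    · exact (hderiv j (hlt j hj hjp) t).differentiableAt
  · by_cases hjp : j = p
    · rw [hjp, funext fun t ↦ (hderivp t).deriv]
      refine ContDiff.sum fun q hq ↦ (A q).contDiff.comp (ih (p + 1 - q) ?_)
      simp only [mem_coe, mem_Icc] at hj hq ⊢; omega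
    · rw [funext fun t ↦ (hderiv j (hlt j hj hjp) t).deriv]
      refine (I (p + 1 - j)).contDiff.comp (ih (j + 1) ?_)
      simp only [mem_coe, mem_Icc] at hj ⊢; omega

lemma iteratedDeriv_eq_opChain_apply
    (hderiv : ∀ j ∈ Icc 1 (p - 1), ∀ t : ℝ, HasDerivAt (Z j) (I (p + 1 - j) (Z (j + 1) t)) t)
    {k : ℕ} (hk : k ≤ p - 1) :
    iteratedDeriv k (Z 1) = fun t ↦ opChain I p (p - k) (Z (k + 1) t) := by
  induction k with
  | zero => ext t; simp
  | succ k ih =>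
    ext t
    have hZ : HasDerivAt (fun s ↦ opChain I p (p - k) (Z (k + 1) s))
        (opChain I p (p - k) (I (p + 1 - (k + 1)) (Z (k + 1 + 1) t))) t :=
      (opChain I p (p - k)).hasFDerivAt.comp_hasDerivAt t
        (hderiv (k + 1) (mem_Icc.2 ⟨by omega, hk⟩) t)
    rw [iteratedDeriv_succ, ih (by omega), hZ.deriv,
      opChain_eq_mul_of_lt I (show p - (k + 1) < p by omega),
      show p - (k + 1) + 1 = p - k by omega, show p + 1 - (k + 1) = p - k by omega]
    rfl

lemma opChain_A_apply_eq_B_iteratedDeriv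
    (hB : ∀ q ∈ Icc 1 (p - 1), opChain I p 1 * A q = B q * opChain I p q)
    (hBp : B p = opChain I p 1 * A p)
    (hderiv : ∀ j ∈ Icc 1 (p - 1), ∀ t : ℝ, HasDerivAt (Z j) (I (p + 1 - j) (Z (j + 1) t)) t)
    {q : ℕ} (hq : q ∈ Icc 1 p) (t : ℝ) :
    opChain I p 1 (A q (Z (p + 1 - q) t)) = B q (iteratedDeriv (p - q) (Z 1) t) := by
  obtain ⟨hq1, hqp⟩ := mem_Icc.1 hq
  rcases hqp.eq_or_lt with rfl | hlt
  · simp [hBp, show q + 1 - q = 1 by omega]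
  · rw [iteratedDeriv_eq_opChain_apply hderiv (by omega), show p - (p - q) = q by omega,
      show p - q + 1 = p + 1 - q by omega]
    exact DFunLike.congr_fun (hB q (mem_Icc.2 ⟨hq1, by omega⟩)) _

end Companion

theorem car_pth_order_ode_general
    {E : Type*} [NormedAddCommGroup E] [NormedSpace ℝ E]
    (p : ℕ) (hp : 1 ≤ p)
    (I A B : ℕ → E →L[ℝ] E)
    (hB : ∀ q ∈ Finset.Icc 1 (p - 1), opChain I p 1 * A q = B q * opChain I p q)
    (hBp : B p = opChain I p 1 * A p)
    (Z : ℕ → ℝ → E)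
    (hderiv : ∀ j ∈ Finset.Icc 1 (p - 1), ∀ t : ℝ,
      HasDerivAt (Z j) (I (p + 1 - j) (Z (j + 1) t)) t)
    (hderivp : ∀ t : ℝ,
      HasDerivAt (Z p) (∑ q ∈ Finset.Icc 1 p, A q (Z (p + 1 - q) t)) t) :
    ContDiff ℝ (p : ℕ∞) (Z 1)
    ∧ ∀ t : ℝ,
        iteratedDeriv p (Z 1) t
          = ∑ q ∈ Finset.Icc 1 p, B q (iteratedDeriv (p - q) (Z 1) t) := by
  refine ⟨(companion_contDiff hderiv hderivp 1 (mem_Icc.2 ⟨le_rfl, hp⟩)).of_le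
    (by exact_mod_cast le_top), fun t ↦ ?_⟩
  obtain ⟨m, rfl⟩ : ∃ m, p = m + 1 := ⟨p - 1, by omega⟩
  have hlast : HasDerivAt (iteratedDeriv m (Z 1))
      (opChain I (m + 1) 1 (∑ q ∈ Icc 1 (m + 1), A q (Z (m + 1 + 1 - q) t))) t := by
    rw [iteratedDeriv_eq_opChain_apply hderiv (by omega), show m + 1 - m = 1 by omega]
    exact (opChain I (m + 1) 1).hasFDerivAt.comp_hasDerivAt t (hderivp t)
  rw [iteratedDeriv_succ, hlast.deriv, map_sum]
  exact sum_congr rfl fun q hq ↦ opChain_A_apply_eq_B_iteratedDeriv hB hBp hderiv hq t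

/-- If `Z₁' = I_p Z₂, …, Z_{p−1}' = I₂ Z_p` and
`Z_p' = A_p Z₁ + ⋯ + A₁ Z_p` (deterministic case), and the intertwining relations
`I_p⋯I₂ A_q = B_q I_p⋯I_{q+1}` (`q = 1,…,p−1`), `B_p = I_p⋯I₂ A_p` hold, then `X := Z₁`
is `p`-times differentiable and `X^{(p)} = Σ_{q=1}^p B_q X^{(p−q)}`, i.e. `Q_p(d/dt)X = 0`. -/
theorem car_pth_order_ode
    {E : Type*} [NormedAddCommGroup E] [NormedSpace ℝ E] [CompleteSpace E]
    (p : ℕ) (hp : 1 ≤ p)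
    (I A B : ℕ → E →L[ℝ] E)
    (hB : ∀ q ∈ Finset.Icc 1 (p - 1), opChain I p 1 * A q = B q * opChain I p q)
    (hBp : B p = opChain I p 1 * A p)
    (Z : ℕ → ℝ → E)
    (hderiv : ∀ j ∈ Finset.Icc 1 (p - 1), ∀ t : ℝ,
      HasDerivAt (Z j) (I (p + 1 - j) (Z (j + 1) t)) t)
    (hderivp : ∀ t : ℝ,
      HasDerivAt (Z p) (∑ q ∈ Finset.Icc 1 p, A q (Z (p + 1 - q) t)) t) :
    ContDiff ℝ (p : ℕ∞) (Z 1)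
    ∧ ∀ t : ℝ,
        iteratedDeriv p (Z 1) t
          = ∑ q ∈ Finset.Icc 1 p, B q (iteratedDeriv (p - q) (Z 1) t) :=
  car_pth_order_ode_general p hp I A B hB hBp Z hderiv hderivp
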